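/- With c = −2i/y, p = √3/(2sy), n = 0, and Λ = −s², the function p satisfies the second pure-radiation Einstein equation: [∂∂̄ + ∂̄∂ + c̄∂ + c∂̄ + (1/2)cc̄ + (3/4)(∂c̄ + ∂̄c)] p = (n + n̄)/p³ + (2/3)Λ p³, where ∂ and ∂̄ are the vector fields dual to μ = dx + i dy and μ̄ in the coframe (λ, μ, μ̄) with λ = (2y⁴/3)(du + y⁻³dx). -/

import Mathlib

/-! All functions involved depend on `y` alone, and on such functions `∂` and `∂̄` act as
`-(i/2) d/dy` and `(i/2) d/dy`. Since `p`, `c` and `c̄` are constant multiples of `1/y`, every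
term of the equation is an explicit multiple of `a/y³`, where `p = a/y`, and the equation
reduces to `p² = 3/(4s²y²)`, i.e. `4s²a² = 3`. -/

noncomputable section

/-- Partial derivative of a complex-valued function on ℝ³ (coordinates (x,y,u)). -/
def pdC (F : (Fin 3 → ℝ) → ℂ) (v : Fin 3 → ℝ) (k : Fin 3) : ℂ :=
  fderiv ℝ F v (Pi.single k 1)

/-- The vector field ∂ dual to μ = dx + i dy in the coframe (λ, μ, μ̄),
λ = (2y⁴/3)(du + y⁻³ dx):  ∂ = (1/2)∂_x − (i/2)∂_y − (1/(2y³))∂_u. -/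
def Dmu (F : (Fin 3 → ℝ) → ℂ) (v : Fin 3 → ℝ) : ℂ :=
  (1 / 2) * pdC F v 0 - (Complex.I / 2) * pdC F v 1 - (1 / (2 * ((v 1 : ℝ) : ℂ) ^ 3)) * pdC F v 2

/-- The vector field ∂̄ dual to μ̄:  ∂̄ = (1/2)∂_x + (i/2)∂_y − (1/(2y³))∂_u. -/
def DmuBar (F : (Fin 3 → ℝ) → ℂ) (v : Fin 3 → ℝ) : ℂ :=
  (1 / 2) * pdC F v 0 + (Complex.I / 2) * pdC F v 1 - (1 / (2 * ((v 1 : ℝ) : ℂ) ^ 3)) * pdC F v 2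

/-- The vector field ∂₀ dual to λ:  ∂₀ = (3/(2y⁴))∂_u. -/
def D0 (F : (Fin 3 → ℝ) → ℂ) (v : Fin 3 → ℝ) : ℂ :=
  (3 / (2 * ((v 1 : ℝ) : ℂ) ^ 4)) * pdC F v 2

/-- c = −2i/y as a function on M. -/
def cF (v : Fin 3 → ℝ) : ℂ := -2 * Complex.I / ((v 1 : ℝ) : ℂ)

/-- p = √3/(2sy) as a (complex-valued) function on M. -/
def pC (s : ℝ) (v : Fin 3 → ℝ) : ℂ := ((Real.sqrt 3 / (2 * s * v 1) : ℝ) : ℂ)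

open Complex

section FunctionsOfY

variable {v : Fin 3 → ℝ}

lemma pdC_comp_apply_one {h : ℝ → ℂ} {d : ℂ} (hd : HasDerivAt h d (v 1)) (k : Fin 3) :
    pdC (fun w => h (w 1)) v k = (Pi.single 1 d : Fin 3 → ℂ) k := by
  have hF : HasFDerivAt (fun w : Fin 3 → ℝ => h (w 1)) _ v :=
    hd.hasFDerivAt.comp v (hasFDerivAt_apply 1 v)
  rw [pdC, hF.fderiv]
  fin_cases k <;> simp

lemma Dmu_comp_apply_one {h : ℝ → ℂ} {d : ℂ} (hd : HasDerivAt h d (v 1)) :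
    Dmu (fun w => h (w 1)) v = -(I / 2) * d := by
  simp [Dmu, pdC_comp_apply_one hd]

lemma DmuBar_comp_apply_one {h : ℝ → ℂ} {d : ℂ} (hd : HasDerivAt h d (v 1)) :
    DmuBar (fun w => h (w 1)) v = I / 2 * d := by
  simp [DmuBar, pdC_comp_apply_one hd]

lemma Filter.EventuallyEq.Dmu_eq {F G : (Fin 3 → ℝ) → ℂ} (h : F =ᶠ[nhds v] G) :
    Dmu F v = Dmu G v := by
  simp only [Dmu, pdC, h.fderiv_eq]

lemma Filter.EventuallyEq.DmuBar_eq {F G : (Fin 3 → ℝ) → ℂ} (h : F =ᶠ[nhds v] G) :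
    DmuBar F v = DmuBar G v := by
  simp only [DmuBar, pdC, h.fderiv_eq]

end FunctionsOfY

lemma hasDerivAt_const_div_ofReal_pow (a : ℂ) (n : ℕ) {y : ℝ} (hy : y ≠ 0) :
    HasDerivAt (fun t : ℝ => a / (t : ℂ) ^ n) (-(n * a) / (y : ℂ) ^ (n + 1)) y := by
  have hyc : (y : ℂ) ≠ 0 := ofReal_ne_zero.mpr hy
  have hpow : HasDerivAt (fun t : ℝ => (t : ℂ) ^ n) (n * (y : ℂ) ^ (n - 1)) y := by
    simpa using (hasDerivAt_id y).ofReal_comp.fun_pow n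
  simp only [div_eq_mul_inv]
  refine ((hpow.fun_inv (pow_ne_zero n hyc)).const_mul a).congr_deriv ?_
  cases n with
  | zero => simp
  | succ m =>
    rw [Nat.add_sub_cancel]
    field_simp
    ring

section PowersOfY

variable (a : ℂ) (n : ℕ) {v : Fin 3 → ℝ}

lemma Dmu_const_div_pow (hv : v 1 ≠ 0) :
    Dmu (fun w => a / ((w 1 : ℝ) : ℂ) ^ n) v
      = I * n * a / (2 * ((v 1 : ℝ) : ℂ) ^ (n + 1)) := by
  rw [Dmu_comp_apply_one (hasDerivAt_const_div_ofReal_pow a n hv)]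
  ring

lemma DmuBar_const_div_pow (hv : v 1 ≠ 0) :
    DmuBar (fun w => a / ((w 1 : ℝ) : ℂ) ^ n) v
      = -(I * n * a) / (2 * ((v 1 : ℝ) : ℂ) ^ (n + 1)) := by
  rw [DmuBar_comp_apply_one (hasDerivAt_const_div_ofReal_pow a n hv)]
  ring

lemma Dmu_DmuBar_const_div_pow (hv : v 1 ≠ 0) :
    Dmu (fun w => DmuBar (fun w => a / ((w 1 : ℝ) : ℂ) ^ n) w) v
      = n * (n + 1) * a / (4 * ((v 1 : ℝ) : ℂ) ^ (n + 2)) := by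
  have hnear : (fun w => DmuBar (fun w => a / ((w 1 : ℝ) : ℂ) ^ n) w)
      =ᶠ[nhds v] fun w => -(I * n * a) / 2 / ((w 1 : ℝ) : ℂ) ^ (n + 1) := by
    filter_upwards [(continuous_apply 1).continuousAt.eventually_ne hv] with w hw
    rw [DmuBar_const_div_pow a n hw, div_div]
  rw [hnear.Dmu_eq, Dmu_const_div_pow _ _ hv]
  push_cast
  linear_combination (-(n * (n + 1) * a) / (4 * ((v 1 : ℝ) : ℂ) ^ (n + 2))) * I_sq

lemma DmuBar_Dmu_const_div_pow (hv : v 1 ≠ 0) :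
    DmuBar (fun w => Dmu (fun w => a / ((w 1 : ℝ) : ℂ) ^ n) w) v
      = n * (n + 1) * a / (4 * ((v 1 : ℝ) : ℂ) ^ (n + 2)) := by
  have hnear : (fun w => Dmu (fun w => a / ((w 1 : ℝ) : ℂ) ^ n) w)
      =ᶠ[nhds v] fun w => I * n * a / 2 / ((w 1 : ℝ) : ℂ) ^ (n + 1) := by
    filter_upwards [(continuous_apply 1).continuousAt.eventually_ne hv] with w hw
    rw [Dmu_const_div_pow a n hw, div_div]
  rw [hnear.DmuBar_eq, DmuBar_const_div_pow _ _ hv]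
  push_cast
  linear_combination (-(n * (n + 1) * a) / (4 * ((v 1 : ℝ) : ℂ) ^ (n + 2))) * I_sq

end PowersOfY

lemma pC_eq_const_div (s : ℝ) :
    pC s = fun w => ((√3 / (2 * s) : ℝ) : ℂ) / ((w 1 : ℝ) : ℂ) ^ 1 := by
  funext w
  simp [pC, div_mul_eq_div_div]

lemma cF_eq_const_div : cF = fun w => -2 * I / ((w 1 : ℝ) : ℂ) ^ 1 := by
  funext w
  simp [cF]

lemma conj_cF_eq_const_div :
    (fun w => starRingEnd ℂ (cF w)) = fun w => 2 * I / ((w 1 : ℝ) : ℂ) ^ 1 := by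
  funext w
  simp [cF, map_ofNat]

/-- With c = −2i/y, p = √3/(2sy), n = 0 and Λ = −s², p satisfies the second
pure-radiation Einstein equation
[∂∂̄ + ∂̄∂ + c̄∂ + c∂̄ + ½cc̄ + ¾(∂c̄ + ∂̄c)] p = (n + n̄)/p³ + (2/3)Λ p³. -/
theorem second_einstein_equation (s : ℝ) (hs : s ≠ 0) (v : Fin 3 → ℝ) (hy : v 1 ≠ 0) :
    Dmu (fun w => DmuBar (pC s) w) v + DmuBar (fun w => Dmu (pC s) w) v
      + starRingEnd ℂ (cF v) * Dmu (pC s) v + cF v * DmuBar (pC s) v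
      + (1 / 2) * cF v * starRingEnd ℂ (cF v) * pC s v
      + (3 / 4) * (Dmu (fun w => starRingEnd ℂ (cF w)) v + DmuBar cF v) * pC s v
    = ((0 : ℂ) + starRingEnd ℂ (0 : ℂ)) / (pC s v) ^ 3
        + (2 / 3) * ((-s ^ 2 : ℝ) : ℂ) * (pC s v) ^ 3 := by
  have ha : 4 * (s : ℂ) ^ 2 * ((√3 / (2 * s) : ℝ) : ℂ) ^ 2 = 3 := by
    norm_cast
    field_simp
    norm_num
  rw [conj_cF_eq_const_div, cF_eq_const_div, pC_eq_const_div]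
  generalize ((√3 / (2 * s) : ℝ) : ℂ) = a at ha ⊢
  simp only [Dmu_DmuBar_const_div_pow _ _ hy, DmuBar_Dmu_const_div_pow _ _ hy,
    Dmu_const_div_pow _ _ hy, DmuBar_const_div_pow _ _ hy, map_div₀, map_mul, map_neg, map_ofNat,
    map_pow, conj_I, conj_ofReal, map_zero, add_zero, zero_div, zero_add]
  push_cast
  linear_combination (3 * a / (2 * ((v 1 : ℝ) : ℂ) ^ 3)) * I_sq
    + (a / (6 * ((v 1 : ℝ) : ℂ) ^ 3)) * ha
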